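/- arXiv:2211.05515 — 3 statements merged into one kernel-verified Lean document; each statement's English description precedes it below -/
import Mathlib

section
/- For any nonzero complex numbers z₁ and z₂, the defect in the triangle inequality satisfies | |z₁ + z₂| − (|z₁| + |z₂|) | ≤ ((1 − cos φ)/2) · (|z₁| + |z₂|), where φ = arg(z₁/z₂). -/
open Complex

/-!
Write `c` for the cosine of the angle between `x` and `y` in a real inner product space. By the
law of cosines, `‖x + y‖² - ((1 + c) / 2 * (‖x‖ + ‖y‖))²` equals
`(1 - c²) / 4 * (‖x‖ + ‖y‖)² + (1 - c) / 2 * (‖x‖ - ‖y‖)² ≥ 0`, which together with the triangle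
inequality bounds the defect `‖x‖ + ‖y‖ - ‖x + y‖` by `(1 - c) / 2 * (‖x‖ + ‖y‖)`. For nonzero
complex numbers the angle between `z₁` and `z₂` is `|arg (z₁ / z₂)|`.
-/

namespace InnerProductGeometry

variable {V : Type*} [NormedAddCommGroup V] [InnerProductSpace ℝ V]

theorem norm_add_sq_eq_norm_sq_add_norm_sq_add_two_mul_norm_mul_norm_mul_cos_angle (x y : V) :
    ‖x + y‖ ^ 2 = ‖x‖ ^ 2 + ‖y‖ ^ 2 + 2 * ‖x‖ * ‖y‖ * Real.cos (angle x y) := by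
  rw [norm_add_sq_real, ← cos_angle_mul_norm_mul_norm]
  ring

theorem one_add_cos_angle_div_two_mul_le_norm_add (x y : V) :
    (1 + Real.cos (angle x y)) / 2 * (‖x‖ + ‖y‖) ≤ ‖x + y‖ := by
  set c := Real.cos (angle x y)
  have hc : c ≤ 1 := Real.cos_le_one _
  have hc' : -1 ≤ c := Real.neg_one_le_cos _
  have hsq : ‖x + y‖ ^ 2 - ((1 + c) / 2 * (‖x‖ + ‖y‖)) ^ 2 =
      (1 - c) * (1 + c) / 4 * (‖x‖ + ‖y‖) ^ 2 + (1 - c) / 2 * (‖x‖ - ‖y‖) ^ 2 := by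
    rw [norm_add_sq_eq_norm_sq_add_norm_sq_add_two_mul_norm_mul_norm_mul_cos_angle]
    ring
  have hnonneg : 0 ≤ (1 - c) * (1 + c) / 4 * (‖x‖ + ‖y‖) ^ 2 + (1 - c) / 2 * (‖x‖ - ‖y‖) ^ 2 := by
    have : 0 ≤ 1 - c := by linarith
    have : 0 ≤ 1 + c := by linarith
    positivity
  exact le_of_pow_le_pow_left₀ two_ne_zero (norm_nonneg _) (by linarith)

theorem abs_norm_add_sub_add_norm_le (x y : V) :
    |‖x + y‖ - (‖x‖ + ‖y‖)| ≤ (1 - Real.cos (angle x y)) / 2 * (‖x‖ + ‖y‖) := by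
  rw [abs_of_nonpos (sub_nonpos.2 (norm_add_le x y))]
  linarith [one_add_cos_angle_div_two_mul_le_norm_add x y]

end InnerProductGeometry

theorem stmt_0 (z₁ z₂ : ℂ) (h₁ : z₁ ≠ 0) (h₂ : z₂ ≠ 0) :
    |‖z₁ + z₂‖ - (‖z₁‖ + ‖z₂‖)| ≤
      ((1 - Real.cos (Complex.arg (z₁ / z₂))) / 2) * (‖z₁‖ + ‖z₂‖) := by
  rw [← Real.cos_abs, ← Complex.angle_eq_abs_arg h₁ h₂]
  exact InnerProductGeometry.abs_norm_add_sub_add_norm_le z₁ z₂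
end

section
/- Given n ≥ 3 positive real numbers a₁, …, aₙ such that each aᵢ is strictly less than the sum of the others, there exist n distinct points A₀, A₁, …, A_{n−1} on a common circle in the plane ℝ² (equivalently ℂ) such that |A₀A₁| = a₁, |A₁A₂| = a₂, …, |A_{n−2}A_{n−1}| = a_{n−1}, and |A_{n−1}A₀| = aₙ. -/
/-!
Put the vertices on a circle of radius `r ≥ max aᵢ / 2`, the side `aᵢ` subtending the central
angle `θᵢ(r) = 2 arcsin (aᵢ / 2r) ∈ (0, π]`. If `∑ θᵢ ≥ 2π` at the smallest radius, then, since
`∑ θᵢ(r) → 0`, the intermediate value theorem gives `r` with `∑ θᵢ(r) = 2π`: the centre lies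
inside the polygon. Otherwise the centre must lie outside: for the longest side `aₘ` (where
`θₘ = π` at the smallest radius) we find `r` with `∑ θᵢ(r) = 2 θₘ(r)`, which is possible because
`r (∑ θᵢ(r) - 2 θₘ(r)) → ∑ aᵢ - 2 aₘ > 0` by the polygon inequality, and use the reflex angle
`2π - θₘ` for that side. Consecutive partial sums of the central angles then place the vertices.
-/

open Finset Filter Topology Real
open scoped Complex

noncomputable def chordAngle (a r : ℝ) : ℝ := 2 * arcsin (a / (2 * r))

lemma two_mul_mul_sin_chordAngle_div_two {a r : ℝ} (ha : 0 < a) (h : a ≤ 2 * r) :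
    2 * r * sin (chordAngle a r / 2) = a := by
  have hr : 0 < 2 * r := ha.trans_le h
  rw [chordAngle, mul_div_cancel_left₀ _ two_ne_zero,
    sin_arcsin (by linarith [div_pos ha hr]) ((div_le_one hr).2 h), mul_div_cancel₀ _ hr.ne']

lemma chordAngle_pos {a r : ℝ} (ha : 0 < a) (hr : 0 < r) : 0 < chordAngle a r :=
  mul_pos two_pos (arcsin_pos.2 (by positivity))

lemma chordAngle_le_pi (a r : ℝ) : chordAngle a r ≤ π := by
  have := arcsin_le_pi_div_two (a / (2 * r))
  rw [chordAngle]; linarith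

lemma chordAngle_self_div_two {a : ℝ} (ha : a ≠ 0) : chordAngle a (a / 2) = π := by
  rw [chordAngle, mul_div_cancel₀ _ two_ne_zero, div_self ha, arcsin_one]
  ring

lemma continuousOn_chordAngle (a : ℝ) : ContinuousOn (chordAngle a) (Set.Ioi 0) := by
  unfold chordAngle
  fun_prop (disch := intro r hr; exact (mul_pos two_pos hr).ne')

lemma chordAngle_eq (a r : ℝ) : chordAngle a r = 2 * arcsin (a * r⁻¹ / 2) := by
  rw [chordAngle]; ring_nf

lemma tendsto_chordAngle_atTop (a : ℝ) : Tendsto (chordAngle a) atTop (𝓝 0) := by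
  have hcont : Continuous fun u : ℝ => 2 * arcsin (a * u / 2) := by fun_prop
  have := (hcont.tendsto 0).comp tendsto_inv_atTop_zero
  simpa [Function.comp_def, ← chordAngle_eq] using this

lemma tendsto_mul_chordAngle_atTop (a : ℝ) :
    Tendsto (fun r => r * chordAngle a r) atTop (𝓝 a) := by
  have hderiv : HasDerivAt (fun u : ℝ => 2 * arcsin (a * u / 2)) a 0 := by
    have h := ((hasDerivAt_arcsin (x := a * 0 / 2) (by simp) (by simp)).comp (0 : ℝ)
      ((hasDerivAt_id 0).const_mul a |>.div_const 2)).const_mul 2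
    exact h.congr_deriv (by norm_num [mul_div_cancel₀])
  have := hasDerivAt_iff_tendsto_slope_zero.1 hderiv |>.comp
    (tendsto_inv_atTop_nhdsGT_zero.mono_right (nhdsWithin_mono _ fun _ hx => ne_of_gt hx))
  refine this.congr fun r => ?_
  simp [chordAngle_eq]

lemma exists_ge_eq_of_continuousOn_Ici {f : ℝ → ℝ} {x₀ y : ℝ} (hf : ContinuousOn f (Set.Ici x₀))
    (h : ∀ᶠ x in atTop, y ∈ Set.uIcc (f x₀) (f x)) : ∃ x ≥ x₀, f x = y := by
  obtain ⟨x₁, hx₁, hy⟩ := ((eventually_ge_atTop x₀).and h).exists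
  obtain ⟨x, hx, rfl⟩ :=
    intermediate_value_uIcc (hf.mono (Set.uIcc_of_le hx₁ ▸ Set.Icc_subset_Ici_self)) hy
  exact ⟨x, (Set.uIcc_of_le hx₁ ▸ hx).1, rfl⟩

section
variable {ι : Type*} [Fintype ι] {a : ι → ℝ} {r₀ : ℝ}

lemma continuousOn_sum_chordAngle (hr₀ : 0 < r₀) :
    ContinuousOn (fun r => ∑ i, chordAngle (a i) r) (Set.Ici r₀) :=
  continuousOn_finsetSum _ fun i _ =>
    (continuousOn_chordAngle (a i)).mono fun _ hr => hr₀.trans_le hr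

lemma exists_sum_chordAngle_eq_two_pi (hr₀ : 0 < r₀) (h : 2 * π ≤ ∑ i, chordAngle (a i) r₀) :
    ∃ r ≥ r₀, ∑ i, chordAngle (a i) r = 2 * π := by
  refine exists_ge_eq_of_continuousOn_Ici (continuousOn_sum_chordAngle hr₀) ?_
  have hlim : Tendsto (fun r => ∑ i, chordAngle (a i) r) atTop (𝓝 0) := by
    simpa using tendsto_finsetSum univ fun i _ => tendsto_chordAngle_atTop (a i)
  filter_upwards [hlim.eventually_le_const (by positivity : (0 : ℝ) < 2 * π)] with r hr
  exact Set.mem_uIcc.2 (Or.inr ⟨hr, h⟩)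

lemma exists_sum_chordAngle_eq_two_mul (hr₀ : 0 < r₀) (i : ι)
    (h : ∑ j, chordAngle (a j) r₀ < 2 * chordAngle (a i) r₀) (hpoly : 2 * a i < ∑ j, a j) :
    ∃ r ≥ r₀, ∑ j, chordAngle (a j) r = 2 * chordAngle (a i) r := by
  set g := fun r => ∑ j, chordAngle (a j) r - 2 * chordAngle (a i) r
  suffices ∃ r ≥ r₀, g r = 0 by simpa [g, sub_eq_zero] using this
  refine exists_ge_eq_of_continuousOn_Ici ((continuousOn_sum_chordAngle hr₀).sub
    (continuousOn_const.mul ((continuousOn_chordAngle (a i)).mono fun _ hr => hr₀.trans_le hr))) ?_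
  have hlim : Tendsto (fun r => r * g r) atTop (𝓝 (∑ j, a j - 2 * a i)) := by
    refine ((tendsto_finsetSum univ fun j _ => tendsto_mul_chordAngle_atTop (a j)).sub
      ((tendsto_mul_chordAngle_atTop (a i)).const_mul 2)).congr fun r => ?_
    simp only [g, mul_sub, mul_sum]
    ring
  filter_upwards [hlim.eventually_const_lt (sub_pos.2 hpoly), eventually_gt_atTop 0] with r hrg hr
  exact Set.mem_uIcc.2 (Or.inl ⟨sub_nonpos.2 h.le, (pos_of_mul_pos_right hrg hr.le).le⟩)

theorem exists_radius_central_angles [Nonempty ι] (hpos : ∀ i, 0 < a i)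
    (hpoly : ∀ i, 2 * a i < ∑ j, a j) :
    ∃ r > 0, ∃ δ : ι → ℝ, (∀ i, 0 < δ i) ∧ ∑ i, δ i = 2 * π ∧
      ∀ i, 2 * r * sin (δ i / 2) = a i := by
  classical
  obtain ⟨i₀, -, hmax⟩ := exists_max_image univ a univ_nonempty
  have hr₀ : 0 < a i₀ / 2 := half_pos (hpos i₀)
  have hchord : ∀ r ≥ a i₀ / 2, ∀ i, 2 * r * sin (chordAngle (a i) r / 2) = a i :=
    fun r hr i => two_mul_mul_sin_chordAngle_div_two (hpos i) (by linarith [hmax i (mem_univ i)])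
  rcases le_or_gt (2 * π) (∑ i, chordAngle (a i) (a i₀ / 2)) with h | h
  · obtain ⟨r, hr, hsum⟩ := exists_sum_chordAngle_eq_two_pi hr₀ h
    exact ⟨r, hr₀.trans_le hr, fun i => chordAngle (a i) r,
      fun i => chordAngle_pos (hpos i) (hr₀.trans_le hr), hsum, hchord r hr⟩
  · have h' : ∑ i, chordAngle (a i) (a i₀ / 2) < 2 * chordAngle (a i₀) (a i₀ / 2) := by
      rwa [chordAngle_self_div_two (hpos i₀).ne']
    obtain ⟨r, hr, hsum⟩ := exists_sum_chordAngle_eq_two_mul hr₀ i₀ h' (hpoly i₀)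
    set θ := fun i => chordAngle (a i) r
    have hθ_pos : ∀ i, 0 < θ i := fun i => chordAngle_pos (hpos i) (hr₀.trans_le hr)
    refine ⟨r, hr₀.trans_le hr, Function.update θ i₀ (2 * π - θ i₀), fun i => ?_, ?_, fun i => ?_⟩
    · rcases eq_or_ne i i₀ with rfl | hi
      · simp only [Function.update_self]
        linarith [chordAngle_le_pi (a i) r, pi_pos]
      · simpa [hi] using hθ_pos i
    · rw [sum_update_of_mem (mem_univ i₀)]
      linarith [sum_eq_add_sum_sdiff_singleton_of_mem (mem_univ i₀) θ]
    · rcases eq_or_ne i i₀ with rfl | hi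
      · rw [Function.update_self, sub_div, mul_div_cancel_left₀ _ two_ne_zero, sin_pi_sub]
        exact hchord r hr i
      · simpa [hi] using hchord r hr i

end

lemma dist_exp_mul_I (s t : ℝ) :
    dist (cexp (s * Complex.I)) (cexp (t * Complex.I)) = |2 * sin ((t - s) / 2)| := by
  have h : cexp (t * Complex.I) - cexp (s * Complex.I)
      = cexp (s * Complex.I) * (cexp (Complex.I * (t - s : ℝ)) - 1) := by
    rw [mul_sub, ← Complex.exp_add]; push_cast; ring_nf
  rw [dist_comm, dist_eq_norm, h, norm_mul, Complex.norm_exp_ofReal_mul_I, one_mul,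
    Complex.norm_exp_I_mul_ofReal_sub_one, Real.norm_eq_abs]

namespace CyclicPolygon

open Fin.NatCast

variable {n : ℕ} [NeZero n] (δ : Fin n → ℝ)

-- `(j : Fin n)` is `j % n`: extending `δ` periodically makes `vertexAngle δ` strictly monotone.
noncomputable def vertexAngle (k : ℕ) : ℝ := ∑ j ∈ range k, δ (j : Fin n)

lemma vertexAngle_zero : vertexAngle δ 0 = 0 := sum_range_zero _

lemma vertexAngle_succ (k : ℕ) : vertexAngle δ (k + 1) = vertexAngle δ k + δ (k : Fin n) :=
  sum_range_succ _ _

lemma vertexAngle_self : vertexAngle δ n = ∑ i, δ i := by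
  rw [vertexAngle, ← Fin.sum_univ_eq_sum_range (fun j => δ (j : Fin n))]
  simp

variable {δ}

lemma strictMono_vertexAngle (hδ : ∀ i, 0 < δ i) : StrictMono (vertexAngle δ) :=
  strictMono_nat_of_lt_succ fun k => by linarith [vertexAngle_succ δ k, hδ (k : Fin n)]

lemma vertexAngle_mem_Ico (hδ : ∀ i, 0 < δ i) (hsum : ∑ i, δ i = 2 * π) {k : ℕ} (hk : k < n) :
    vertexAngle δ k ∈ Set.Ico 0 (2 * π) :=
  ⟨vertexAngle_zero δ ▸ (strictMono_vertexAngle hδ).monotone k.zero_le,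
    hsum ▸ vertexAngle_self δ ▸ strictMono_vertexAngle hδ hk⟩

variable (δ)

noncomputable def vertex (r : ℝ) (k : ℕ) : ℂ := r * cexp (vertexAngle δ k * Complex.I)

variable {δ}

lemma norm_vertex (r : ℝ) (k : ℕ) : ‖vertex δ r k‖ = |r| := by
  simp [vertex, Complex.norm_exp_ofReal_mul_I]

lemma vertex_self (hsum : ∑ i, δ i = 2 * π) (r : ℝ) : vertex δ r n = vertex δ r 0 := by
  simp [vertex, vertexAngle_self, vertexAngle_zero, hsum]

lemma dist_vertex_succ (r : ℝ) (k : ℕ) (h₀ : 0 ≤ δ (k : Fin n)) (h₁ : δ (k : Fin n) ≤ 2 * π) :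
    dist (vertex δ r k) (vertex δ r (k + 1)) = 2 * |r| * sin (δ (k : Fin n) / 2) := by
  have hsin : 0 ≤ sin (δ (k : Fin n) / 2) :=
    sin_nonneg_of_nonneg_of_le_pi (by linarith) (by linarith)
  rw [vertex, vertex, dist_eq_norm, ← mul_sub, norm_mul, ← dist_eq_norm, dist_exp_mul_I,
    vertexAngle_succ, add_sub_cancel_left, abs_mul, abs_two, abs_of_nonneg hsin, Complex.norm_real,
    Real.norm_eq_abs]
  ring

lemma injOn_vertex (hδ : ∀ i, 0 < δ i) (hsum : ∑ i, δ i = 2 * π) {r : ℝ} (hr : r ≠ 0) :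
    Set.InjOn (vertex δ r) (Set.Iio n) := by
  intro k hk l hl hkl
  have hexp : Circle.exp (vertexAngle δ k) = Circle.exp (vertexAngle δ l) :=
    Circle.ext (by simpa [vertex, hr] using hkl)
  exact (strictMono_vertexAngle hδ).injective (Circle.exp_injOn_Ico (by simp)
    (vertexAngle_mem_Ico hδ hsum hk) (vertexAngle_mem_Ico hδ hsum hl) hexp)

end CyclicPolygon

open CyclicPolygon in
theorem exists_concyclic_of_central_angles {n : ℕ} (hn : 1 < n) {a δ : Fin n → ℝ} {r : ℝ}
    (hr : 0 < r) (hδ : ∀ i, 0 < δ i) (hsum : ∑ i, δ i = 2 * π)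
    (hchord : ∀ i, 2 * r * sin (δ i / 2) = a i) :
    ∃ A : Fin n → ℂ, Function.Injective A ∧
      (∃ (c : ℂ) (r : ℝ), 0 < r ∧ ∀ i, dist (A i) c = r) ∧
      ∀ i : Fin n, dist (A i) (A (i + ⟨1, hn⟩)) = a i := by
  have : NeZero n := ⟨by omega⟩
  refine ⟨fun i => vertex δ r i,
    fun i j hij => Fin.ext (injOn_vertex hδ hsum hr.ne' i.isLt j.isLt hij),
    ⟨0, r, hr, fun i => by simp [norm_vertex, abs_of_pos hr]⟩, fun i => ?_⟩
  have hnext : vertex δ r (i + ⟨1, hn⟩ : Fin n) = vertex δ r (i + 1) := by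
    rw [Fin.val_add]
    change vertex δ r ((i + 1) % n) = _
    obtain h | h : (i : ℕ) + 1 < n ∨ (i : ℕ) + 1 = n := by omega
    · rw [Nat.mod_eq_of_lt h]
    · rw [h, Nat.mod_self, vertex_self hsum]
  have hδ_le : δ i ≤ 2 * π := hsum ▸ single_le_sum (fun j _ => (hδ j).le) (mem_univ i)
  dsimp only
  rw [hnext, dist_vertex_succ r i (by simpa using (hδ i).le) (by simpa using hδ_le),
    abs_of_pos hr, Fin.cast_val_eq_self, hchord]

theorem stmt_4 (n : ℕ) (hn : 3 ≤ n) (a : Fin n → ℝ) (hpos : ∀ i, 0 < a i)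
    (hpoly : ∀ i, a i < ∑ j ∈ Finset.univ.erase i, a j) :
    ∃ A : Fin n → ℂ, Function.Injective A ∧
      (∃ (c : ℂ) (r : ℝ), 0 < r ∧ ∀ i, dist (A i) c = r) ∧
      ∀ i : Fin n, dist (A i) (A (i + ⟨1, by omega⟩)) = a i := by
  have : NeZero n := ⟨by omega⟩
  obtain ⟨r, hr, δ, hδ, hsum, hchord⟩ := exists_radius_central_angles hpos fun i => by
    linarith [hpoly i, add_sum_erase univ a (mem_univ i)]
  exact exists_concyclic_of_central_angles (by omega) hr hδ hsum hchord
end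

section
/- Let γ : ℝ → ℂ be continuous, 2π-periodic, and injective on [0, 2π) (i.e., a parametrization of a Jordan curve). Suppose (σᵢ^(m))_{i=0..n} are sequences with 0 = σ₀^(m) ≤ σ₁^(m) ≤ … ≤ σₙ^(m) = 2π converging to limits σᵢ* ∈ [0, 2π], and suppose |γ(σᵢ^(m)) − γ(σ_{i−1}^(m))| → 0 for each i = 1, …, n. Then for each i, either σᵢ* − σ_{i−1}* = 0 or σᵢ* − σ_{i−1}* = 2π. -/
open Filter Real

/-! Passing to the limit in `‖γ(σᵢ) - γ(σᵢ₋₁)‖ → 0` by continuity gives `γ(σᵢ*) = γ(σᵢ₋₁*)`.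
On `[0, 2π]` the only coincidences of a Jordan parametrization are trivial ones and
`γ 0 = γ (2π)`, so the two limits are equal or are `0` and `2π`. -/

theorem Function.Periodic.sub_eq_zero_or_eq_period_of_injOn {α : Type*} {γ : ℝ → α} {T : ℝ}
    (hper : Function.Periodic γ T) (hinj : Set.InjOn γ (Set.Ico 0 T)) {a b : ℝ}
    (hb : 0 ≤ b) (hba : b ≤ a) (ha : a ≤ T) (hγ : γ a = γ b) :
    a - b = 0 ∨ a - b = T := by
  rcases ha.lt_or_eq with ha | rfl
  · left
    rw [sub_eq_zero]
    exact hinj ⟨hb.trans hba, ha⟩ ⟨hb, hba.trans_lt ha⟩ hγ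
  · rcases hba.lt_or_eq with hba | rfl
    · right
      have hγb : γ b = γ 0 := by rw [← hγ, ← zero_add a, hper 0]
      have hb0 : b = 0 := hinj ⟨hb, hba⟩ ⟨le_rfl, hb.trans_lt hba⟩ hγb
      rw [hb0, sub_zero]
    · exact Or.inl (sub_self b)

theorem Continuous.eq_of_tendsto_norm_sub_comp {E : Type*} [NormedAddCommGroup E] {f : ℝ → E} (hf : Continuous f) {u v : ℕ → ℝ} {x y : ℝ}
    (hu : Tendsto u atTop (nhds x)) (hv : Tendsto v atTop (nhds y))
    (hsmall : Tendsto (fun m => ‖f (u m) - f (v m)‖) atTop (nhds 0)) :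
    f x = f y := by
  have hlim : Tendsto (fun m => ‖f (u m) - f (v m)‖) atTop (nhds ‖f x - f y‖) :=
    (((hf.tendsto x).comp hu).sub ((hf.tendsto y).comp hv)).norm
  rw [← sub_eq_zero, ← norm_eq_zero]
  exact tendsto_nhds_unique hlim hsmall

theorem stmt_11_general (γ : ℝ → ℂ) (hcont : Continuous γ)
    (hper : Function.Periodic γ (2 * Real.pi))
    (hinj : Set.InjOn γ (Set.Ico 0 (2 * Real.pi)))
    (n : ℕ) (σ : ℕ → Fin (n + 1) → ℝ) (σstar : Fin (n + 1) → ℝ)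
    (hmono : ∀ m, Monotone (σ m))
    (hconv : ∀ i, Tendsto (fun m => σ m i) atTop (nhds (σstar i)))
    (hrange : ∀ i, σstar i ∈ Set.Icc 0 (2 * Real.pi))
    (hsmall : ∀ i : Fin n,
      Tendsto (fun m => ‖γ (σ m i.succ) - γ (σ m i.castSucc)‖) atTop (nhds 0)) :
    ∀ i : Fin n, σstar i.succ - σstar i.castSucc = 0 ∨
      σstar i.succ - σstar i.castSucc = 2 * Real.pi := by
  intro i
  have hle : σstar i.castSucc ≤ σstar i.succ :=
    le_of_tendsto_of_tendsto' (hconv i.castSucc) (hconv i.succ)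
      fun m => hmono m (Fin.castSucc_le_succ i)
  exact hper.sub_eq_zero_or_eq_period_of_injOn hinj (hrange i.castSucc).1 hle (hrange i.succ).2
    (hcont.eq_of_tendsto_norm_sub_comp (hconv i.succ) (hconv i.castSucc) (hsmall i))

theorem stmt_11 (γ : ℝ → ℂ) (hcont : Continuous γ)
    (hper : Function.Periodic γ (2 * Real.pi))
    (hinj : Set.InjOn γ (Set.Ico 0 (2 * Real.pi)))
    (n : ℕ) (σ : ℕ → Fin (n + 1) → ℝ) (σstar : Fin (n + 1) → ℝ)
    (hzero : ∀ m, σ m 0 = 0)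
    (hlast : ∀ m, σ m (Fin.last n) = 2 * Real.pi)
    (hmono : ∀ m, Monotone (σ m))
    (hconv : ∀ i, Tendsto (fun m => σ m i) atTop (nhds (σstar i)))
    (hrange : ∀ i, σstar i ∈ Set.Icc 0 (2 * Real.pi))
    (hsmall : ∀ i : Fin n,
      Tendsto (fun m => ‖γ (σ m i.succ) - γ (σ m i.castSucc)‖) atTop (nhds 0)) :
    ∀ i : Fin n, σstar i.succ - σstar i.castSucc = 0 ∨
      σstar i.succ - σstar i.castSucc = 2 * Real.pi :=
  stmt_11_general γ hcont hper hinj n σ σstar hmono hconv hrange hsmall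
end
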